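/- Let (T_i) be i.i.d. random variables with 1 ≤ T_i ≤ N and E[T_1] ≥ c√N for some c > 0. Let M = ⌊2N²/E[T_1]⌋ + 1 and L = max{k : T_1 + ... + T_k ≤ N²}. Then E[L] ≤ M + N²·P(T_1 + ... + T_M ≤ N²), and P(T_1 + ... + T_M ≤ N²) ≤ M·E[T_1²]/N⁴, so E[L] ≤ C·N^{3/2} for a constant C depending only on c. -/

import Mathlib

open MeasureTheory ProbabilityTheory Finset

/-!
Let `L` count the renewals `T₁ + ⋯ + T_k` that stay below `N²`. Since every `T_i ≥ 1`, `L ≤ N²`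
always, while `L < M` unless `T₁ + ⋯ + T_M ≤ N²`; this gives `E[L] ≤ M + N² P(T₁ + ⋯ + T_M ≤ N²)`.
The choice of `M` makes `M E[T₁] ≥ 2N²`, so that event is a downward deviation of size at least
`N²` from the mean, and Chebyshev bounds its probability by `M Var(T₁) / N⁴ ≤ M E[T₁²] / N⁴ ≤ M / N²`.
Hence `E[L] ≤ 2M`, and `M ≤ 2N² / (c√N) + 1 ≤ (2/c + 1) N^{3/2}`.
-/

noncomputable def renewalCount (t : ℕ → ℝ) (a : ℝ) : ℕ :=
  sSup {k : ℕ | ∑ i ∈ range k, t i ≤ a}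

section RenewalCount

variable {t : ℕ → ℝ} {a : ℝ}

theorem natCast_le_sum_range_of_one_le (ht : ∀ i, 1 ≤ t i) (n : ℕ) :
    (n : ℝ) ≤ ∑ i ∈ range n, t i := by
  simpa using Finset.card_nsmul_le_sum (range n) t 1 fun i _ => ht i

theorem bddAbove_setOf_sum_range_le (ht : ∀ i, 1 ≤ t i) :
    BddAbove {k : ℕ | ∑ i ∈ range k, t i ≤ a} :=
  ⟨⌊a⌋₊, fun k hk => Nat.le_floor ((natCast_le_sum_range_of_one_le ht k).trans hk)⟩

theorem le_renewalCount_iff (ht : ∀ i, 1 ≤ t i) (ha : 0 ≤ a) {n : ℕ} :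
    n ≤ renewalCount t a ↔ ∑ i ∈ range n, t i ≤ a := by
  refine ⟨fun hn => ?_, fun hn => le_csSup (bddAbove_setOf_sum_range_le ht) hn⟩
  have hmem : ∑ i ∈ range (renewalCount t a), t i ≤ a :=
    Nat.sSup_mem ⟨0, by simpa using ha⟩ (bddAbove_setOf_sum_range_le ht)
  exact le_trans (sum_le_sum_of_subset_of_nonneg (range_subset_range.mpr hn)
    fun i _ _ => zero_le_one.trans (ht i)) hmem

theorem renewalCount_le (ht : ∀ i, 1 ≤ t i) (ha : 0 ≤ a) : (renewalCount t a : ℝ) ≤ a :=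
  (natCast_le_sum_range_of_one_le ht _).trans ((le_renewalCount_iff ht ha).mp le_rfl)

end RenewalCount

section Probability

variable {Ω : Type*} [MeasurableSpace Ω] {μ : Measure Ω}

theorem measurable_renewalCount {T : ℕ → Ω → ℝ} {a : ℝ} (hT : ∀ i, Measurable (T i))
    (hT1 : ∀ i ω, 1 ≤ T i ω) (ha : 0 ≤ a) :
    Measurable fun ω => renewalCount (fun i => T i ω) a := by
  refine measurable_of_Ici fun n => ?_
  have hpre : (fun ω => renewalCount (fun i => T i ω) a) ⁻¹' Set.Ici n
      = {ω | ∑ i ∈ range n, T i ω ≤ a} :=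
    Set.ext fun ω => le_renewalCount_iff (fun i => hT1 i ω) ha
  rw [hpre]
  exact measurableSet_le (Finset.measurable_sum _ fun i _ => hT i) measurable_const

theorem integral_renewalCount_le [IsProbabilityMeasure μ] {T : ℕ → Ω → ℝ} {a : ℝ}
    (hT : ∀ i, Measurable (T i)) (hT1 : ∀ i ω, 1 ≤ T i ω) (ha : 0 ≤ a) (m : ℕ) :
    ∫ ω, (renewalCount (fun i => T i ω) a : ℝ) ∂μ
      ≤ m + a * μ.real {ω | ∑ i ∈ range m, T i ω ≤ a} := by
  set A := {ω | ∑ i ∈ range m, T i ω ≤ a}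
  have hA : MeasurableSet A :=
    measurableSet_le (Finset.measurable_sum _ fun i _ => hT i) measurable_const
  have hpoint : ∀ ω, (renewalCount (fun i => T i ω) a : ℝ) ≤ m + A.indicator (fun _ => a) ω := by
    intro ω
    by_cases hω : ω ∈ A
    · rw [Set.indicator_of_mem hω]
      linarith [renewalCount_le (fun i => hT1 i ω) ha, (Nat.cast_nonneg m : (0 : ℝ) ≤ m)]
    · rw [Set.indicator_of_notMem hω, add_zero, Nat.cast_le]
      exact (lt_of_not_ge fun h => hω ((le_renewalCount_iff (fun i => hT1 i ω) ha).mp h)).le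
  have hint : Integrable (fun ω => (m : ℝ) + A.indicator (fun _ => a) ω) μ :=
    (integrable_const _).add ((integrable_const a).indicator hA)
  have hL : Integrable (fun ω => (renewalCount (fun i => T i ω) a : ℝ)) μ := by
    refine (integrable_const a).mono'
      (measurable_from_top.comp (measurable_renewalCount hT hT1 ha)).aestronglyMeasurable
      (ae_of_all _ fun ω => ?_)
    rw [Real.norm_natCast]
    exact renewalCount_le (fun i => hT1 i ω) ha
  calc ∫ ω, (renewalCount (fun i => T i ω) a : ℝ) ∂μ
      ≤ ∫ ω, ((m : ℝ) + A.indicator (fun _ => a) ω) ∂μ := integral_mono hL hint hpoint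
    _ = m + a * μ.real A := by
      rw [integral_add (integrable_const _) ((integrable_const a).indicator hA),
        integral_const, integral_indicator_const _ hA]
      simp [mul_comm]

theorem measureReal_sum_range_le_sub_le [IsFiniteMeasure μ] {X : ℕ → Ω → ℝ}
    (hX : ∀ i, MemLp (X i) 2 μ) (hindep : Pairwise fun i j => X i ⟂ᵢ[μ] X j)
    (hident : ∀ i, IdentDistrib (X i) (X 0) μ μ) (n : ℕ) {r : ℝ} (hr : 0 < r) :
    μ.real {ω | ∑ i ∈ range n, X i ω ≤ n * μ[X 0] - r} ≤ n * variance (X 0) μ / r ^ 2 := by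
  have hS : MemLp (∑ i ∈ range n, X i) 2 μ := memLp_finsetSum' _ fun i _ => hX i
  have hmean : μ[∑ i ∈ range n, X i] = (n : ℝ) * μ[X 0] := by
    simp only [Finset.sum_apply]
    rw [integral_finsetSum _ fun i _ => (hX i).integrable one_le_two]
    simp [fun i => (hident i).integral_eq]
  have hvar : variance (∑ i ∈ range n, X i) μ = (n : ℝ) * variance (X 0) μ := by
    rw [IndepFun.variance_sum (fun i _ => hX i) fun i _ j _ hij => hindep hij]
    simp [fun i => (hident i).variance_eq]
  have hsub : {ω | ∑ i ∈ range n, X i ω ≤ n * μ[X 0] - r}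
      ⊆ {ω | r ≤ |(∑ i ∈ range n, X i) ω - μ[∑ i ∈ range n, X i]|} := by
    intro ω hω
    change ∑ i ∈ range n, X i ω ≤ n * μ[X 0] - r at hω
    show r ≤ |_|
    rw [hmean, Finset.sum_apply, abs_sub_comm, abs_of_nonneg] <;> linarith
  rw [← hvar, measureReal_def]
  refine ENNReal.toReal_le_of_le_ofReal (div_nonneg (variance_nonneg _ _) (sq_nonneg r)) ?_
  exact (measure_mono hsub).trans (meas_ge_le_variance_div_sq hS hr)

theorem measureReal_sum_range_le_le_div_sq [IsProbabilityMeasure μ] {X : ℕ → Ω → ℝ}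
    (hX : ∀ i, MemLp (X i) 2 μ) (hindep : Pairwise fun i j => X i ⟂ᵢ[μ] X j)
    (hident : ∀ i, IdentDistrib (X i) (X 0) μ μ) {n : ℕ} {a : ℝ} (ha : 0 < a)
    (hn : 2 * a ≤ n * μ[X 0]) :
    μ.real {ω | ∑ i ∈ range n, X i ω ≤ a} ≤ n * (∫ ω, (X 0 ω) ^ 2 ∂μ) / a ^ 2 :=
  calc μ.real {ω | ∑ i ∈ range n, X i ω ≤ a}
      ≤ μ.real {ω | ∑ i ∈ range n, X i ω ≤ n * μ[X 0] - a} :=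
        measureReal_mono <| Set.ofPred_subset_ofPred.mpr fun ω hω => by linarith
    _ ≤ n * variance (X 0) μ / a ^ 2 := measureReal_sum_range_le_sub_le hX hindep hident n ha
    _ ≤ n * (∫ ω, (X 0 ω) ^ 2 ∂μ) / a ^ 2 := by
        gcongr
        simpa using variance_le_expectation_sq (hX 0).aestronglyMeasurable

end Probability

theorem le_natFloor_div_add_one_mul {x y : ℝ} (hy : 0 < y) : x ≤ (⌊x / y⌋₊ + 1) * y :=
  ((div_lt_iff₀ hy).mp (Nat.lt_floor_add_one _)).le

theorem natFloor_two_mul_sq_div_add_one_le {c x e : ℝ} (hc : 0 < c) (hx : 1 ≤ x)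
    (he : c * Real.sqrt x ≤ e) :
    (⌊2 * x ^ 2 / e⌋₊ + 1 : ℝ) ≤ (2 / c + 1) * x ^ ((3 : ℝ) / 2) := by
  have hx0 : 0 < x := zero_lt_one.trans_le hx
  have hcx : 0 < c * Real.sqrt x := by positivity
  have hsplit : x ^ ((3 : ℝ) / 2) * Real.sqrt x = x ^ 2 := by
    rw [Real.sqrt_eq_rpow, ← Real.rpow_add hx0]
    norm_num
  have hfloor : (⌊2 * x ^ 2 / e⌋₊ : ℝ) ≤ 2 / c * x ^ ((3 : ℝ) / 2) :=
    calc (⌊2 * x ^ 2 / e⌋₊ : ℝ) ≤ 2 * x ^ 2 / e :=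
          Nat.floor_le (div_nonneg (by positivity) (hcx.le.trans he))
      _ ≤ 2 * x ^ 2 / (c * Real.sqrt x) := by gcongr
      _ = 2 / c * x ^ ((3 : ℝ) / 2) := by rw [← hsplit]; field_simp
  linarith [Real.one_le_rpow hx (by norm_num : (0 : ℝ) ≤ 3 / 2)]

/-- Renewal-theoretic estimate: for i.i.d. `T_i` with `1 ≤ T_i ≤ N` and
`E[T₁] ≥ c√N`, setting `M = ⌊2N²/E[T₁]⌋ + 1` and
`L = max{k : T₁ + ⋯ + T_k ≤ N²}`, one has
`E[L] ≤ M + N² P(T₁ + ⋯ + T_M ≤ N²)`, `P(T₁ + ⋯ + T_M ≤ N²) ≤ M E[T₁²]/N⁴`,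
and hence `E[L] ≤ C N^{3/2}` with `C` depending only on `c`. -/
theorem stmt_14 (c : ℝ) (hc : 0 < c) :
    ∃ C : ℝ, 0 < C ∧
      ∀ (Ω : Type) (mΩ : MeasurableSpace Ω) (μ : Measure Ω), IsProbabilityMeasure μ →
      ∀ (T : ℕ → Ω → ℝ), (∀ i, Measurable (T i)) →
        iIndepFun T μ →
        (∀ i, IdentDistrib (T i) (T 0) μ μ) →
        ∀ N : ℕ, 1 ≤ N →
        (∀ i, ∀ ω, 1 ≤ T i ω ∧ T i ω ≤ N) →
        c * Real.sqrt N ≤ ∫ ω, T 0 ω ∂μ →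
        ∀ M : ℕ, M = ⌊2 * (N : ℝ) ^ 2 / ∫ ω, T 0 ω ∂μ⌋₊ + 1 →
        ∀ L : Ω → ℕ,
          (∀ ω, L ω = sSup {k : ℕ | ∑ i ∈ range k, T i ω ≤ (N : ℝ) ^ 2}) →
        (∫ ω, (L ω : ℝ) ∂μ
            ≤ M + N ^ 2 * (μ {ω | ∑ i ∈ range M, T i ω ≤ (N : ℝ) ^ 2}).toReal) ∧
        ((μ {ω | ∑ i ∈ range M, T i ω ≤ (N : ℝ) ^ 2}).toReal
            ≤ M * (∫ ω, (T 0 ω) ^ 2 ∂μ) / N ^ 4) ∧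
        (∫ ω, (L ω : ℝ) ∂μ ≤ C * (N : ℝ) ^ ((3 : ℝ) / 2)) := by
  refine ⟨4 / c + 2, by positivity, ?_⟩
  intro Ω mΩ μ hμ T hT hindep hident N hN hTN hE M hM L hL
  obtain rfl : L = fun ω => renewalCount (fun i => T i ω) ((N : ℝ) ^ 2) := funext hL
  have hT2 i : MemLp (T i) 2 μ :=
    memLp_of_bounded (ae_of_all _ (hTN i)) (hT i).aestronglyMeasurable 2
  have hEpos : 0 < ∫ ω, T 0 ω ∂μ := lt_of_lt_of_le (by positivity) hE
  have hMlarge : 2 * (N : ℝ) ^ 2 ≤ M * ∫ ω, T 0 ω ∂μ := by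
    simpa [hM] using le_natFloor_div_add_one_mul (x := 2 * (N : ℝ) ^ 2) hEpos
  have hsecond : ∫ ω, (T 0 ω) ^ 2 ∂μ ≤ (N : ℝ) ^ 2 := by
    simpa using integral_mono_of_nonneg (ae_of_all μ fun ω => sq_nonneg (T 0 ω))
      (integrable_const ((N : ℝ) ^ 2)) (ae_of_all μ fun ω =>
        pow_le_pow_left₀ (zero_le_one.trans (hTN 0 ω).1) (hTN 0 ω).2 2)
  have part1 := integral_renewalCount_le (μ := μ) (a := (N : ℝ) ^ 2) hT
    (fun i ω => (hTN i ω).1) (by positivity) M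
  have part2 : μ.real {ω | ∑ i ∈ range M, T i ω ≤ (N : ℝ) ^ 2}
      ≤ M * (∫ ω, (T 0 ω) ^ 2 ∂μ) / N ^ 4 := by
    simpa [← pow_mul] using measureReal_sum_range_le_le_div_sq hT2
      (fun i j hij => hindep.indepFun hij) hident (by positivity) hMlarge
  have hexcess : (N : ℝ) ^ 2 * μ.real {ω | ∑ i ∈ range M, T i ω ≤ (N : ℝ) ^ 2} ≤ (M : ℝ) :=
    calc (N : ℝ) ^ 2 * μ.real {ω | ∑ i ∈ range M, T i ω ≤ (N : ℝ) ^ 2}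
        ≤ (N : ℝ) ^ 2 * (M * (∫ ω, (T 0 ω) ^ 2 ∂μ) / N ^ 4) := by gcongr
      _ ≤ (N : ℝ) ^ 2 * (M * (N : ℝ) ^ 2 / N ^ 4) := by gcongr
      _ = (M : ℝ) := by field_simp
  have hMbound : (M : ℝ) ≤ (2 / c + 1) * (N : ℝ) ^ ((3 : ℝ) / 2) := by
    simpa [hM] using natFloor_two_mul_sq_div_add_one_le hc (Nat.one_le_cast.mpr hN) hE
  refine ⟨part1, part2, ?_⟩
  calc _ ≤ 2 * (M : ℝ) := by linarith
    _ ≤ 2 * ((2 / c + 1) * (N : ℝ) ^ ((3 : ℝ) / 2)) := by gcongr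
    _ = (4 / c + 2) * (N : ℝ) ^ ((3 : ℝ) / 2) := by ring
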